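/- arXiv:2204.02076 — 3 statements merged into one kernel-verified Lean document; each statement's English description precedes it below -/
import Mathlib

section
/- For all ecumenical formulas A and B, the formula (A →c B) ↔i ¬(A ∧ ¬B) is provable in the ecumenical sequent calculus LE (i.e., ⊢_LE (A →c B) ↔i ¬(A ∧ ¬B)). -/
namespace Ecumenical

/-! First-order ecumenical language (locally nameless: de Bruijn bound vars,
    named free vars) and the ecumenical sequent calculus LE. -/

inductive Tm where
  | bvar : Nat → Tm
  | fvar : Nat → Tm

/-- Replace the bound variable of index `k` by the free variable `y`. -/
def Tm.openT (k y : Nat) : Tm → Tm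
  | .bvar n => if n = k then .fvar y else .bvar n
  | .fvar n => .fvar n

def Tm.fv : Tm → Finset Nat
  | .bvar _ => ∅
  | .fvar n => {n}

/-- Ecumenical first-order formulas. `ati`/`atc` are intuitionistic/classical
    atomic predicates; quantifiers bind the de Bruijn index 0. -/
inductive Fm where
  | ati : Nat → List Tm → Fm
  | atc : Nat → List Tm → Fm
  | bot : Fm
  | neg : Fm → Fm
  | and : Fm → Fm → Fm
  | ori : Fm → Fm → Fm
  | orc : Fm → Fm → Fm
  | impi : Fm → Fm → Fm
  | impc : Fm → Fm → Fm
  | all : Fm → Fm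
  | exi : Fm → Fm
  | exc : Fm → Fm

def Fm.openF (k y : Nat) : Fm → Fm
  | .ati p ts => .ati p (ts.map (Tm.openT k y))
  | .atc p ts => .atc p (ts.map (Tm.openT k y))
  | .bot => .bot
  | .neg A => .neg (A.openF k y)
  | .and A B => .and (A.openF k y) (B.openF k y)
  | .ori A B => .ori (A.openF k y) (B.openF k y)
  | .orc A B => .orc (A.openF k y) (B.openF k y)
  | .impi A B => .impi (A.openF k y) (B.openF k y)
  | .impc A B => .impc (A.openF k y) (B.openF k y)
  | .all A => .all (A.openF (k+1) y)
  | .exi A => .exi (A.openF (k+1) y)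
  | .exc A => .exc (A.openF (k+1) y)

/-- `A.inst y` is `A[y/x]`: the body of a quantifier instantiated with `y`. -/
def Fm.inst (A : Fm) (y : Nat) : Fm := A.openF 0 y

def Fm.fv : Fm → Finset Nat
  | .ati _ ts => ts.foldr (fun t s => t.fv ∪ s) ∅
  | .atc _ ts => ts.foldr (fun t s => t.fv ∪ s) ∅
  | .bot => ∅
  | .neg A => A.fv
  | .and A B => A.fv ∪ B.fv
  | .ori A B => A.fv ∪ B.fv
  | .orc A B => A.fv ∪ B.fv
  | .impi A B => A.fv ∪ B.fv
  | .impc A B => A.fv ∪ B.fv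
  | .all A => A.fv
  | .exi A => A.fv
  | .exc A => A.fv

/-- `y` is fresh for every formula in the context `Γ`. -/
def FreshIn (y : Nat) (Γ : Multiset Fm) : Prop := ∀ B ∈ Γ, y ∉ B.fv

/-- Intuitionistic bi-implication `A ↔i B`. -/
def Fm.iffi (A B : Fm) : Fm := .and (.impi A B) (.impi B A)

/-- The ecumenical sequent calculus LE, with single-succedent sequents `Γ ⊢ C`. -/
inductive LE : Multiset Fm → Fm → Prop where
  | init (p ts Γ) : LE (Fm.ati p ts ::ₘ Γ) (Fm.ati p ts)
  | botL (Γ A) : LE (Fm.bot ::ₘ Γ) A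
  | cut {Γ A C} : LE Γ A → LE (A ::ₘ Γ) C → LE Γ C
  | wk {Γ} (A) : LE Γ Fm.bot → LE Γ A
  | andL {Γ A B C} : LE (A ::ₘ B ::ₘ Γ) C → LE (Fm.and A B ::ₘ Γ) C
  | andR {Γ A B} : LE Γ A → LE Γ B → LE Γ (Fm.and A B)
  | oriL {Γ A B C} : LE (A ::ₘ Γ) C → LE (B ::ₘ Γ) C → LE (Fm.ori A B ::ₘ Γ) C
  | oriR1 {Γ A} (B) : LE Γ A → LE Γ (Fm.ori A B)
  | oriR2 {Γ B} (A) : LE Γ B → LE Γ (Fm.ori A B)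
  | impiL {Γ A B C} : LE (Fm.impi A B ::ₘ Γ) A → LE (B ::ₘ Γ) C →
      LE (Fm.impi A B ::ₘ Γ) C
  | impiR {Γ A B} : LE (A ::ₘ Γ) B → LE Γ (Fm.impi A B)
  | negL {Γ A} : LE (Fm.neg A ::ₘ Γ) A → LE (Fm.neg A ::ₘ Γ) Fm.bot
  | negR {Γ A} : LE (A ::ₘ Γ) Fm.bot → LE Γ (Fm.neg A)
  | allL {Γ A C} (y) : LE (A.inst y ::ₘ Fm.all A ::ₘ Γ) C → LE (Fm.all A ::ₘ Γ) C
  | allR {Γ A} (y) : y ∉ A.fv → FreshIn y Γ → LE Γ (A.inst y) → LE Γ (Fm.all A)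
  | exiL {Γ A C} (y) : y ∉ A.fv → FreshIn y Γ → y ∉ C.fv →
      LE (A.inst y ::ₘ Γ) C → LE (Fm.exi A ::ₘ Γ) C
  | exiR {Γ A} (y) : LE Γ (A.inst y) → LE Γ (Fm.exi A)
  | orcR {Γ A B} : LE (Fm.neg A ::ₘ Fm.neg B ::ₘ Γ) Fm.bot → LE Γ (Fm.orc A B)
  | impcR {Γ A B} : LE (A ::ₘ Fm.neg B ::ₘ Γ) Fm.bot → LE Γ (Fm.impc A B)
  | excR {Γ A} : LE (Fm.all (Fm.neg A) ::ₘ Γ) Fm.bot → LE Γ (Fm.exc A)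
  | Rc {Γ p ts} : LE (Fm.neg (Fm.ati p ts) ::ₘ Γ) Fm.bot → LE Γ (Fm.atc p ts)
  | orcL {Γ A B} : LE (A ::ₘ Γ) Fm.bot → LE (B ::ₘ Γ) Fm.bot →
      LE (Fm.orc A B ::ₘ Γ) Fm.bot
  | impcL {Γ A B} : LE (Fm.impc A B ::ₘ Γ) A → LE (B ::ₘ Γ) Fm.bot →
      LE (Fm.impc A B ::ₘ Γ) Fm.bot
  | excL {Γ A} (y) : y ∉ A.fv → FreshIn y Γ →
      LE (A.inst y ::ₘ Γ) Fm.bot → LE (Fm.exc A ::ₘ Γ) Fm.bot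
  | Lc {Γ p ts} : LE (Fm.ati p ts ::ₘ Γ) Fm.bot → LE (Fm.atc p ts ::ₘ Γ) Fm.bot



/-- Size measure, invariant under opening. -/
def Fm.size : Fm → Nat
  | .ati _ _ => 1
  | .atc _ _ => 1
  | .bot => 1
  | .neg A => A.size + 1
  | .and A B => A.size + B.size + 1
  | .ori A B => A.size + B.size + 1
  | .orc A B => A.size + B.size + 1
  | .impi A B => A.size + B.size + 1
  | .impc A B => A.size + B.size + 1
  | .all A => A.size + 1
  | .exi A => A.size + 1
  | .exc A => A.size + 1

lemma size_openF (A : Fm) : ∀ k y, (A.openF k y).size = A.size := by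
  induction A <;> intro k y <;> simp [Fm.openF, Fm.size, *]

lemma size_inst (A : Fm) (y : Nat) : (A.inst y).size = A.size := size_openF A 0 y

def ctxFv (Γ : Multiset Fm) : Finset Nat := (Γ.map Fm.fv).sup

lemma freshIn_of {y : Nat} {Γ : Multiset Fm} (h : y ∉ ctxFv Γ) : FreshIn y Γ := by
  intro B hB hy
  exact h (Finset.mem_of_subset (Multiset.le_sup (Multiset.mem_map_of_mem Fm.fv hB)) hy)

lemma freshIn_cons {y : Nat} {X : Fm} {Γ : Multiset Fm} (h1 : y ∉ X.fv)
    (h2 : FreshIn y Γ) : FreshIn y (X ::ₘ Γ) := by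
  intro B hB
  rcases Multiset.mem_cons.mp hB with rfl | h
  · exact h1
  · exact h2 B h

open Multiset in
lemma ident_aux : ∀ n (A : Fm), A.size ≤ n → ∀ Γ : Multiset Fm, LE (A ::ₘ Γ) A := by
  intro n
  induction n with
  | zero => intro A h; cases A <;> simp [Fm.size] at h
  | succ n ih =>
    intro A h Γ
    cases A with
    | ati p ts => exact .init ..
    | atc p ts =>
      apply LE.Rc
      rw [Multiset.cons_swap]
      apply LE.Lc
      rw [Multiset.cons_swap]
      apply LE.negL
      rw [Multiset.cons_swap]
      exact .init ..
    | bot => exact .botL ..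
    | neg A =>
      simp only [Fm.size] at h
      apply LE.negR
      rw [Multiset.cons_swap]
      apply LE.negL
      rw [Multiset.cons_swap]
      exact ih A (by omega) _
    | and A B =>
      simp only [Fm.size] at h
      apply LE.andL
      apply LE.andR
      · exact ih A (by omega) _
      · rw [Multiset.cons_swap]
        exact ih B (by omega) _
    | ori A B =>
      simp only [Fm.size] at h
      apply LE.oriL
      · exact LE.oriR1 _ (ih A (by omega) _)
      · exact LE.oriR2 _ (ih B (by omega) _)
    | orc A B =>
      simp only [Fm.size] at h
      apply LE.orcR
      rw [Multiset.cons_swap (Fm.neg B) (Fm.orc A B),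
          Multiset.cons_swap (Fm.neg A) (Fm.orc A B)]
      apply LE.orcL
      · rw [Multiset.cons_swap A (Fm.neg A)]
        apply LE.negL
        rw [Multiset.cons_swap (Fm.neg A) A]
        exact ih A (by omega) _
      · rw [Multiset.cons_swap (Fm.neg A) (Fm.neg B),
            Multiset.cons_swap B (Fm.neg B)]
        apply LE.negL
        rw [Multiset.cons_swap (Fm.neg B) B]
        exact ih B (by omega) _
    | impi A B =>
      simp only [Fm.size] at h
      apply LE.impiR
      rw [Multiset.cons_swap]
      apply LE.impiL
      · rw [Multiset.cons_swap]
        exact ih A (by omega) _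
      · exact ih B (by omega) _
    | impc A B =>
      simp only [Fm.size] at h
      apply LE.impcR
      rw [Multiset.cons_swap (Fm.neg B) (Fm.impc A B),
          Multiset.cons_swap A (Fm.impc A B)]
      apply LE.impcL
      · rw [Multiset.cons_swap (Fm.impc A B) A]
        exact ih A (by omega) _
      · rw [Multiset.cons_swap A (Fm.neg B), Multiset.cons_swap B (Fm.neg B)]
        apply LE.negL
        rw [Multiset.cons_swap (Fm.neg B) B]
        exact ih B (by omega) _
    | all A =>
      simp only [Fm.size] at h
      obtain ⟨y, hy⟩ := Infinite.exists_notMem_finset (A.fv ∪ ctxFv Γ)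
      simp only [Finset.mem_union] at hy
      push_neg at hy
      apply LE.allR y hy.1 (freshIn_cons (by exact hy.1) (freshIn_of hy.2))
      apply LE.allL y
      exact ih (A.inst y) (by rw [size_inst]; omega) _
    | exi A =>
      simp only [Fm.size] at h
      obtain ⟨y, hy⟩ := Infinite.exists_notMem_finset (A.fv ∪ ctxFv Γ)
      simp only [Finset.mem_union] at hy
      push_neg at hy
      apply LE.exiL y hy.1 (freshIn_of hy.2) (by exact hy.1)
      exact LE.exiR y (ih (A.inst y) (by rw [size_inst]; omega) _)
    | exc A =>
      simp only [Fm.size] at h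
      apply LE.excR
      rw [Multiset.cons_swap]
      obtain ⟨y, hy⟩ := Infinite.exists_notMem_finset (A.fv ∪ ctxFv Γ)
      simp only [Finset.mem_union] at hy
      push_neg at hy
      apply LE.excL y hy.1 (freshIn_cons (by exact hy.1) (freshIn_of hy.2))
      rw [Multiset.cons_swap]
      apply LE.allL y
      show LE (Fm.neg (A.inst y) ::ₘ _) _
      apply LE.negL
      rw [Multiset.cons_swap (Fm.all (Fm.neg A)) (A.inst y),
          Multiset.cons_swap (Fm.neg (A.inst y)) (A.inst y)]
      exact ih (A.inst y) (by rw [size_inst]; omega) _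

lemma ident (A : Fm) (Γ : Multiset Fm) : LE (A ::ₘ Γ) A :=
  ident_aux A.size A le_rfl Γ

/-- For all ecumenical formulas A and B, `⊢_LE (A →c B) ↔i ¬(A ∧ ¬B)`. -/
theorem LE_impc_iffi_neg_and (A B : Fm) :
    LE 0 (Fm.iffi (.impc A B) (.neg (.and A (.neg B)))) := by
  apply LE.andR
  · -- A →c B ⊢ ¬(A ∧ ¬B)
    apply LE.impiR
    apply LE.negR
    apply LE.andL
    rw [Multiset.cons_swap (Fm.neg B) (Fm.impc A B),
        Multiset.cons_swap A (Fm.impc A B)]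
    apply LE.impcL
    · rw [Multiset.cons_swap (Fm.impc A B) A]
      exact ident A _
    · rw [Multiset.cons_swap A (Fm.neg B), Multiset.cons_swap B (Fm.neg B)]
      apply LE.negL
      rw [Multiset.cons_swap (Fm.neg B) B]
      exact ident B _
  · -- ¬(A ∧ ¬B) ⊢ A →c B
    apply LE.impiR
    apply LE.impcR
    rw [Multiset.cons_swap (Fm.neg B) (Fm.neg (Fm.and A (Fm.neg B))),
        Multiset.cons_swap A (Fm.neg (Fm.and A (Fm.neg B)))]
    apply LE.negL
    apply LE.andR
    · rw [Multiset.cons_swap (Fm.neg (Fm.and A (Fm.neg B))) A]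
      exact ident A _
    · rw [Multiset.cons_swap A (Fm.neg B),
          Multiset.cons_swap (Fm.neg (Fm.and A (Fm.neg B))) (Fm.neg B)]
      exact ident (Fm.neg B) _


end Ecumenical
end

section
/- Classical weakening is admissible in the ecumenical stoup calculus LCE: for all contexts Γ, Γ', Δ, Δ' and stoup Π, if the sequent Γ ⊢ Δ; Π is provable in LCE, then the sequent Γ, Γ' ⊢ Δ, Δ'; Π is provable in LCE. -/
namespace Ecumenical

/-- A formula is negative iff its main connective is classical or negation. -/
def Fm.isNeg : Fm → Bool
  | .atc _ _ => true
  | .orc _ _ => true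
  | .impc _ _ => true
  | .exc _ => true
  | .neg _ => true
  | _ => false

/-- A formula is positive iff it is not negative. -/
def Fm.isPos (A : Fm) : Bool := !A.isNeg

/-- `y` is fresh for the (at most one) formula in the stoup `S`. -/
def FreshInO (y : Nat) : Option Fm → Prop
  | none => True
  | some A => y ∉ A.fv

/-- The ecumenical sequent calculus with stoup, with the cut rules P-cut and N-cut.
    Sequents are `Γ ⊢ Δ; S`, where `Γ` is the left context, `Δ` the classical
    right context, and the stoup `S` holds at most one formula (`none` = `·`). -/
inductive LCE : Multiset Fm → Multiset Fm → Option Fm → Prop where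
  | init (p ts Γ Δ) : LCE (.ati p ts ::ₘ Γ) Δ (some (.ati p ts))
  | der {Γ Δ P} : P.isPos = true → LCE Γ (P ::ₘ Δ) (some P) → LCE Γ (P ::ₘ Δ) none
  | store {Γ Δ N} : N.isNeg = true → LCE Γ (N ::ₘ Δ) none → LCE Γ Δ (some N)
  | wk {Γ Δ} (A) : LCE Γ Δ none → LCE Γ Δ (some A)
  | andL {Γ Δ A B S} : LCE (A ::ₘ B ::ₘ Γ) Δ S → LCE (.and A B ::ₘ Γ) Δ S
  | andR {Γ Δ A B} : LCE Γ Δ (some A) → LCE Γ Δ (some B) →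
      LCE Γ Δ (some (.and A B))
  | oriL {Γ Δ A B S} : LCE (A ::ₘ Γ) Δ S → LCE (B ::ₘ Γ) Δ S →
      LCE (.ori A B ::ₘ Γ) Δ S
  | oriR1 {Γ Δ A} (B) : LCE Γ Δ (some A) → LCE Γ Δ (some (.ori A B))
  | oriR2 {Γ Δ B} (A) : LCE Γ Δ (some B) → LCE Γ Δ (some (.ori A B))
  | impiL {Γ Δ A B S} : LCE (.impi A B ::ₘ Γ) Δ (some A) → LCE (B ::ₘ Γ) Δ S →
      LCE (.impi A B ::ₘ Γ) Δ S
  | impiR {Γ Δ A B} : LCE (A ::ₘ Γ) Δ (some B) → LCE Γ Δ (some (.impi A B))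
  | negL {Γ Δ A} : LCE (.neg A ::ₘ Γ) Δ (some A) → LCE (.neg A ::ₘ Γ) Δ none
  | negR {Γ Δ A} : LCE (A ::ₘ Γ) Δ none → LCE Γ (.neg A ::ₘ Δ) none
  | exiL {Γ Δ A S} (y) : y ∉ A.fv → FreshIn y Γ → FreshIn y Δ → FreshInO y S →
      LCE (A.inst y ::ₘ Γ) Δ S → LCE (.exi A ::ₘ Γ) Δ S
  | exiR {Γ Δ A} (y) : LCE Γ Δ (some (A.inst y)) → LCE Γ Δ (some (.exi A))
  | allL {Γ Δ A S} (y) : LCE (A.inst y ::ₘ .all A ::ₘ Γ) Δ S →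
      LCE (.all A ::ₘ Γ) Δ S
  | allR {Γ Δ A} (y) : y ∉ A.fv → FreshIn y Γ → FreshIn y Δ →
      LCE Γ Δ (some (A.inst y)) → LCE Γ Δ (some (.all A))
  | orcL {Γ Δ A B} : LCE (A ::ₘ Γ) Δ none → LCE (B ::ₘ Γ) Δ none →
      LCE (.orc A B ::ₘ Γ) Δ none
  | orcR {Γ Δ A B} : LCE Γ (A ::ₘ B ::ₘ Δ) none → LCE Γ (.orc A B ::ₘ Δ) none
  | impcL {Γ Δ A B} : LCE (.impc A B ::ₘ Γ) Δ (some A) → LCE (B ::ₘ Γ) Δ none →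
      LCE (.impc A B ::ₘ Γ) Δ none
  | impcR {Γ Δ A B} : LCE (A ::ₘ Γ) (B ::ₘ Δ) none → LCE Γ (.impc A B ::ₘ Δ) none
  | Lc {Γ Δ p ts} : LCE (.ati p ts ::ₘ Γ) Δ none → LCE (.atc p ts ::ₘ Γ) Δ none
  | Rc {Γ Δ p ts} : LCE Γ (.ati p ts ::ₘ Δ) none → LCE Γ (.atc p ts ::ₘ Δ) none
  | excL {Γ Δ A} (y) : y ∉ A.fv → FreshIn y Γ → FreshIn y Δ →
      LCE (A.inst y ::ₘ Γ) Δ none → LCE (.exc A ::ₘ Γ) Δ none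
  | excR {Γ Δ A} (y) : LCE Γ (A.inst y ::ₘ .exc A ::ₘ Δ) none →
      LCE Γ (.exc A ::ₘ Δ) none
  | pcut {Γ Δ P S} : P.isPos = true → LCE Γ Δ (some P) → LCE (P ::ₘ Γ) Δ S →
      LCE Γ Δ S
  | ncut {Γ Δ N S St} : N.isNeg = true →
      (St = none ∨ ∃ P, St = some P ∧ P.isPos = true ∧ P ∈ Δ) →
      LCE Γ (N ::ₘ Δ) St → LCE (N ::ₘ Γ) Δ S → LCE Γ Δ S

/-!
Weakening is proved by induction on the derivation. Every rule commutes with enlarging the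
contexts except ∃iL, ∀R and ∃cL, whose eigenvariable `y` may occur in the added formulas. Since
derivations are closed under injective renamings of free variables, the premise is weakened by
the added formulas with `y` and a fresh `y'` swapped, and then the swap is applied to the whole
derivation: it turns the eigenvariable into `y'` and restores the added formulas.
-/

open Function

def Tm.rename (σ : ℕ → ℕ) : Tm → Tm
  | .bvar n => .bvar n
  | .fvar n => .fvar (σ n)

def Fm.rename (σ : ℕ → ℕ) : Fm → Fm
  | .ati p ts => .ati p (ts.map (Tm.rename σ))
  | .atc p ts => .atc p (ts.map (Tm.rename σ))
  | .bot => .bot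
  | .neg A => .neg (A.rename σ)
  | .and A B => .and (A.rename σ) (B.rename σ)
  | .ori A B => .ori (A.rename σ) (B.rename σ)
  | .orc A B => .orc (A.rename σ) (B.rename σ)
  | .impi A B => .impi (A.rename σ) (B.rename σ)
  | .impc A B => .impc (A.rename σ) (B.rename σ)
  | .all A => .all (A.rename σ)
  | .exi A => .exi (A.rename σ)
  | .exc A => .exc (A.rename σ)

theorem Tm.rename_openT (σ : ℕ → ℕ) (k y : ℕ) (t : Tm) :
    (t.openT k y).rename σ = (t.rename σ).openT k (σ y) := by
  cases t with
  | bvar n => by_cases h : n = k <;> simp [Tm.openT, Tm.rename, h]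
  | fvar n => rfl

theorem Fm.rename_openF (σ : ℕ → ℕ) (k y : ℕ) (A : Fm) :
    (A.openF k y).rename σ = (A.rename σ).openF k (σ y) := by
  induction A generalizing k <;> simp_all [Fm.openF, Fm.rename, Tm.rename_openT]

theorem Fm.rename_inst (σ : ℕ → ℕ) (y : ℕ) (A : Fm) :
    (A.inst y).rename σ = (A.rename σ).inst (σ y) :=
  A.rename_openF σ 0 y

theorem Tm.rename_comp (σ τ : ℕ → ℕ) (t : Tm) :
    (t.rename σ).rename τ = t.rename (τ ∘ σ) := by
  cases t <;> rfl

theorem Fm.rename_comp (σ τ : ℕ → ℕ) (A : Fm) :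
    (A.rename σ).rename τ = A.rename (τ ∘ σ) := by
  induction A <;> simp_all [Fm.rename, Tm.rename_comp]

theorem Fm.isNeg_rename (σ : ℕ → ℕ) (A : Fm) : (A.rename σ).isNeg = A.isNeg := by
  cases A <;> rfl

theorem Fm.isPos_rename (σ : ℕ → ℕ) (A : Fm) : (A.rename σ).isPos = A.isPos := by
  simp only [Fm.isPos, Fm.isNeg_rename]

theorem Tm.fv_rename (σ : ℕ → ℕ) (t : Tm) : (t.rename σ).fv = t.fv.image σ := by
  cases t <;> simp [Tm.rename, Tm.fv]

theorem mem_foldr_fv {x : ℕ} {ts : List Tm} :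
    x ∈ ts.foldr (fun t s => t.fv ∪ s) ∅ ↔ ∃ t ∈ ts, x ∈ t.fv := by
  induction ts <;> simp_all

theorem foldr_fv_map_rename (σ : ℕ → ℕ) (ts : List Tm) :
    (ts.map (Tm.rename σ)).foldr (fun t s => t.fv ∪ s) ∅ =
      (ts.foldr (fun t s => t.fv ∪ s) (∅ : Finset ℕ)).image σ := by
  induction ts <;> simp_all [Tm.fv_rename, Finset.image_union]

theorem Fm.fv_rename (σ : ℕ → ℕ) (A : Fm) : (A.rename σ).fv = A.fv.image σ := by
  induction A <;> simp_all [Fm.rename, Fm.fv, Finset.image_union, foldr_fv_map_rename]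

theorem Tm.rename_eq_self {σ : ℕ → ℕ} {t : Tm} (h : ∀ x ∈ t.fv, σ x = x) :
    t.rename σ = t := by
  cases t with
  | bvar n => rfl
  | fvar n => simp [Tm.rename, h n (by simp [Tm.fv])]

theorem Fm.rename_eq_self {σ : ℕ → ℕ} {A : Fm} (h : ∀ x ∈ A.fv, σ x = x) :
    A.rename σ = A := by
  induction A with
  | ati p ts | atc p ts =>
    simp only [Fm.fv, mem_foldr_fv] at h
    refine congrArg _ ((List.map_congr_left fun t ht => ?_).trans (List.map_id' ts))
    exact Tm.rename_eq_self fun x hx => h x ⟨t, ht, hx⟩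
  | _ => simp_all [Fm.rename, Fm.fv]

theorem Fm.mem_fv_rename_iff {σ : ℕ → ℕ} (hσ : Injective σ) {A : Fm} {y : ℕ} :
    σ y ∈ (A.rename σ).fv ↔ y ∈ A.fv := by
  rw [Fm.fv_rename, hσ.mem_finset_image]

theorem FreshIn.map_rename {σ : ℕ → ℕ} (hσ : Injective σ) {y : ℕ} {Γ : Multiset Fm}
    (h : FreshIn y Γ) : FreshIn (σ y) (Γ.map (Fm.rename σ)) := by
  simpa only [FreshIn, Multiset.forall_mem_map_iff, Fm.mem_fv_rename_iff hσ] using h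

theorem FreshInO.map_rename {σ : ℕ → ℕ} (hσ : Injective σ) {y : ℕ} {S : Option Fm}
    (h : FreshInO y S) : FreshInO (σ y) (S.map (Fm.rename σ)) := by
  cases S with
  | none => trivial
  | some A => exact (Fm.mem_fv_rename_iff hσ).not.2 h

theorem LCE.rename {σ : ℕ → ℕ} (hσ : Injective σ) {Γ Δ : Multiset Fm} {S : Option Fm}
    (h : LCE Γ Δ S) :
    LCE (Γ.map (Fm.rename σ)) (Δ.map (Fm.rename σ)) (S.map (Fm.rename σ)) := by
  induction h <;>
    simp only [Multiset.map_cons, Option.map_some, Option.map_none, Fm.rename,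
      Fm.rename_inst] at *
  case init => exact .init ..
  case der hP _ ih => exact .der ((Fm.isPos_rename σ _).trans hP) ih
  case store hN _ ih => exact .store ((Fm.isNeg_rename σ _).trans hN) ih
  case wk ih => exact .wk _ ih
  case andL ih => exact .andL ih
  case andR ih₁ ih₂ => exact .andR ih₁ ih₂
  case oriL ih₁ ih₂ => exact .oriL ih₁ ih₂
  case oriR1 ih => exact .oriR1 _ ih
  case oriR2 ih => exact .oriR2 _ ih
  case impiL ih₁ ih₂ => exact .impiL ih₁ ih₂
  case impiR ih => exact .impiR ih
  case negL ih => exact .negL ih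
  case negR ih => exact .negR ih
  case exiL hA hΓ hΔ hS _ ih =>
    exact .exiL _ ((Fm.mem_fv_rename_iff hσ).not.2 hA) (hΓ.map_rename hσ) (hΔ.map_rename hσ)
      (hS.map_rename hσ) ih
  case exiR ih => exact .exiR _ ih
  case allL ih => exact .allL _ ih
  case allR hA hΓ hΔ _ ih =>
    exact .allR _ ((Fm.mem_fv_rename_iff hσ).not.2 hA) (hΓ.map_rename hσ) (hΔ.map_rename hσ) ih
  case orcL ih₁ ih₂ => exact .orcL ih₁ ih₂
  case orcR ih => exact .orcR ih
  case impcL ih₁ ih₂ => exact .impcL ih₁ ih₂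
  case impcR ih => exact .impcR ih
  case Lc ih => exact .Lc ih
  case Rc ih => exact .Rc ih
  case excL hA hΓ hΔ _ ih =>
    exact .excL _ ((Fm.mem_fv_rename_iff hσ).not.2 hA) (hΓ.map_rename hσ) (hΔ.map_rename hσ) ih
  case excR ih => exact .excR _ ih
  case pcut hP _ _ ih₁ ih₂ => exact .pcut ((Fm.isPos_rename σ _).trans hP) ih₁ ih₂
  case ncut hN hSt _ _ ih₁ ih₂ =>
    refine .ncut ((Fm.isNeg_rename σ _).trans hN) ?_ ih₁ ih₂
    rcases hSt with rfl | ⟨P, rfl, hP, hPΔ⟩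
    · exact .inl rfl
    · exact .inr ⟨_, rfl, (Fm.isPos_rename σ P).trans hP, Multiset.mem_map_of_mem _ hPΔ⟩

theorem freshIn_add {y : ℕ} {Γ Γ' : Multiset Fm} :
    FreshIn y (Γ + Γ') ↔ FreshIn y Γ ∧ FreshIn y Γ' := by
  simp only [FreshIn, Multiset.mem_add, or_imp, forall_and]

theorem exists_fresh (A : Fm) (Γ Δ : Multiset Fm) (S : Option Fm) :
    ∃ y, y ∉ A.fv ∧ FreshIn y Γ ∧ FreshIn y Δ ∧ FreshInO y S := by
  obtain ⟨y, hy⟩ := Infinite.exists_notMem_finset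
    (A.fv ∪ (Γ.map Fm.fv).sup ∪ (Δ.map Fm.fv).sup ∪ S.elim ∅ Fm.fv)
  simp only [Finset.mem_union, not_or] at hy
  obtain ⟨⟨⟨hA, hΓ⟩, hΔ⟩, hS⟩ := hy
  refine ⟨y, hA, fun B hB hyB => hΓ ?_, fun B hB hyB => hΔ ?_, ?_⟩
  · exact Multiset.le_sup (Multiset.mem_map_of_mem Fm.fv hB) hyB
  · exact Multiset.le_sup (Multiset.mem_map_of_mem Fm.fv hB) hyB
  · cases S with
    | none => trivial
    | some B => exact hS

section Swap

variable {y y' : ℕ}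

theorem Fm.rename_swap_of_notMem {A : Fm} (hy : y ∉ A.fv) (hy' : y' ∉ A.fv) :
    A.rename (Equiv.swap y y') = A :=
  Fm.rename_eq_self fun _ hx =>
    Equiv.swap_apply_of_ne_of_ne (ne_of_mem_of_not_mem hx hy) (ne_of_mem_of_not_mem hx hy')

theorem Fm.rename_swap_inst {A : Fm} (hy : y ∉ A.fv) (hy' : y' ∉ A.fv) :
    (A.inst y).rename (Equiv.swap y y') = A.inst y' := by
  rw [Fm.rename_inst, Fm.rename_swap_of_notMem hy hy', Equiv.swap_apply_left]

theorem Fm.rename_swap_rename_swap (A : Fm) :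
    (A.rename (Equiv.swap y y')).rename (Equiv.swap y y') = A := by
  rw [Fm.rename_comp]
  exact Fm.rename_eq_self fun x _ => Equiv.swap_apply_self y y' x

theorem FreshIn.map_rename_swap {Γ : Multiset Fm} (hy : FreshIn y Γ) (hy' : FreshIn y' Γ) :
    Γ.map (Fm.rename (Equiv.swap y y')) = Γ :=
  (Multiset.map_congr rfl fun B hB => Fm.rename_swap_of_notMem (hy B hB) (hy' B hB)).trans
    Γ.map_id'

theorem FreshInO.map_rename_swap {S : Option Fm} (hy : FreshInO y S) (hy' : FreshInO y' S) :
    S.map (Fm.rename (Equiv.swap y y')) = S := by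
  cases S with
  | none => rfl
  | some A => exact congrArg some (Fm.rename_swap_of_notMem hy hy')

theorem map_rename_swap_map_rename_swap (Γ : Multiset Fm) :
    (Γ.map (Fm.rename (Equiv.swap y y'))).map (Fm.rename (Equiv.swap y y')) = Γ := by
  simp only [Multiset.map_map, Function.comp_def, Fm.rename_swap_rename_swap, Multiset.map_id']

theorem LCE.swap_eigenvariable_ctx {A : Fm} {Γ Δ Γ' Δ' : Multiset Fm} {S : Option Fm}
    (hA : y ∉ A.fv) (hΓ : FreshIn y Γ) (hΔ : FreshIn y Δ) (hS : FreshInO y S)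
    (hA' : y' ∉ A.fv) (hΓ' : FreshIn y' (Γ + Γ')) (hΔ' : FreshIn y' (Δ + Δ'))
    (hS' : FreshInO y' S)
    (h : LCE (A.inst y ::ₘ (Γ + Γ'.map (Fm.rename (Equiv.swap y y'))))
      (Δ + Δ'.map (Fm.rename (Equiv.swap y y'))) S) :
    LCE (A.inst y' ::ₘ (Γ + Γ')) (Δ + Δ') S := by
  simpa only [Multiset.map_cons, Multiset.map_add, Fm.rename_swap_inst hA hA',
    hΓ.map_rename_swap (freshIn_add.1 hΓ').1, hΔ.map_rename_swap (freshIn_add.1 hΔ').1,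
    hS.map_rename_swap hS', map_rename_swap_map_rename_swap]
    using h.rename (Equiv.swap y y').injective

theorem LCE.swap_eigenvariable_stoup {A : Fm} {Γ Δ Γ' Δ' : Multiset Fm}
    (hA : y ∉ A.fv) (hΓ : FreshIn y Γ) (hΔ : FreshIn y Δ)
    (hA' : y' ∉ A.fv) (hΓ' : FreshIn y' (Γ + Γ')) (hΔ' : FreshIn y' (Δ + Δ'))
    (h : LCE (Γ + Γ'.map (Fm.rename (Equiv.swap y y')))
      (Δ + Δ'.map (Fm.rename (Equiv.swap y y'))) (some (A.inst y))) :
    LCE (Γ + Γ') (Δ + Δ') (some (A.inst y')) := by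
  simpa only [Option.map_some, Multiset.map_add, Fm.rename_swap_inst hA hA',
    hΓ.map_rename_swap (freshIn_add.1 hΓ').1, hΔ.map_rename_swap (freshIn_add.1 hΔ').1,
    map_rename_swap_map_rename_swap]
    using h.rename (Equiv.swap y y').injective

end Swap

/-- Classical weakening is admissible in LCE. -/
theorem LCE_weakening_admissible (Γ Γ' Δ Δ' : Multiset Fm) (S : Option Fm)
    (h : LCE Γ Δ S) : LCE (Γ + Γ') (Δ + Δ') S := by
  induction h generalizing Γ' Δ' <;> try simp only [Multiset.cons_add] at *
  case init => exact .init ..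
  case der hP _ ih => exact .der hP (ih _ _)
  case store hN _ ih => exact .store hN (ih _ _)
  case wk ih => exact .wk _ (ih _ _)
  case andL ih => exact .andL (ih _ _)
  case andR ih₁ ih₂ => exact .andR (ih₁ _ _) (ih₂ _ _)
  case oriL ih₁ ih₂ => exact .oriL (ih₁ _ _) (ih₂ _ _)
  case oriR1 ih => exact .oriR1 _ (ih _ _)
  case oriR2 ih => exact .oriR2 _ (ih _ _)
  case impiL ih₁ ih₂ => exact .impiL (ih₁ _ _) (ih₂ _ _)
  case impiR ih => exact .impiR (ih _ _)
  case negL ih => exact .negL (ih _ _)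
  case negR ih => exact .negR (ih _ _)
  case exiL Γ Δ A S y hA hΓ hΔ hS _ ih =>
    obtain ⟨y', hA', hΓ', hΔ', hS'⟩ := exists_fresh A (Γ + Γ') (Δ + Δ') S
    exact .exiL y' hA' hΓ' hΔ' hS' (.swap_eigenvariable_ctx hA hΓ hΔ hS hA' hΓ' hΔ' hS' (ih _ _))
  case exiR ih => exact .exiR _ (ih _ _)
  case allL ih => exact .allL _ (ih _ _)
  case allR Γ Δ A y hA hΓ hΔ _ ih =>
    obtain ⟨y', hA', hΓ', hΔ', -⟩ := exists_fresh A (Γ + Γ') (Δ + Δ') none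
    exact .allR y' hA' hΓ' hΔ' (.swap_eigenvariable_stoup hA hΓ hΔ hA' hΓ' hΔ' (ih _ _))
  case orcL ih₁ ih₂ => exact .orcL (ih₁ _ _) (ih₂ _ _)
  case orcR ih => exact .orcR (ih _ _)
  case impcL ih₁ ih₂ => exact .impcL (ih₁ _ _) (ih₂ _ _)
  case impcR ih => exact .impcR (ih _ _)
  case Lc ih => exact .Lc (ih _ _)
  case Rc ih => exact .Rc (ih _ _)
  case excL Γ Δ A y hA hΓ hΔ _ ih =>
    obtain ⟨y', hA', hΓ', hΔ', hS'⟩ := exists_fresh A (Γ + Γ') (Δ + Δ') none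
    exact .excL y' hA' hΓ' hΔ' (.swap_eigenvariable_ctx hA hΓ hΔ trivial hA' hΓ' hΔ' hS' (ih _ _))
  case excR ih => exact .excR _ (ih _ _)
  case pcut hP _ _ ih₁ ih₂ => exact .pcut hP (ih₁ _ _) (ih₂ _ _)
  case ncut hN hSt _ _ ih₁ ih₂ =>
    refine .ncut hN (hSt.imp id ?_) (ih₁ _ _) (ih₂ _ _)
    exact fun ⟨P, hSt, hP, hPΔ⟩ => ⟨P, hSt, hP, Multiset.mem_add.2 (.inl hPΔ)⟩

end Ecumenical
end

section
/- In the labeled ecumenical modal system labEK, the classical diamond is definable from box and negation: for every ecumenical modal formula A and label x, the sequent · ⊢ ·; x : (◇c A ↔i ¬□¬A) is provable in labEK, where ↔i denotes intuitionistic bi-implication. -/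
namespace Ecumenical

/-- Ecumenical (propositional) modal formulas, with intuitionistic and
    classical atoms, neutral `⊥, ¬, ∧`, intuitionistic `∨i, →i, ◇i`,
    classical `∨c, →c, ◇c`, and the neutral box `□`. -/
inductive MFm where
  | ati : Nat → MFm
  | atc : Nat → MFm
  | bot : MFm
  | neg : MFm → MFm
  | and : MFm → MFm → MFm
  | ori : MFm → MFm → MFm
  | orc : MFm → MFm → MFm
  | impi : MFm → MFm → MFm
  | impc : MFm → MFm → MFm
  | box : MFm → MFm
  | diai : MFm → MFm
  | diac : MFm → MFm

/-- A modal formula is negative iff its main connective is classical or `¬`. -/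
def MFm.isNeg : MFm → Bool
  | .atc _ => true
  | .orc _ _ => true
  | .impc _ _ => true
  | .diac _ => true
  | .neg _ => true
  | _ => false

/-- A modal formula is positive iff it is not negative. -/
def MFm.isPos (A : MFm) : Bool := !A.isNeg

/-- Intuitionistic bi-implication `A ↔i B`. -/
def MFm.iffi (A B : MFm) : MFm := .and (.impi A B) (.impi B A)

/-- A labeled formula `x : A`. -/
abbrev LFm := Nat × MFm

/-- The label `y` does not occur in the relational context `R`, the left
    context `Γ`, or the classical right context `Δ`. -/
def FreshLab (y : Nat) (R : Multiset (Nat × Nat))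
    (Γ Δ : Multiset LFm) : Prop :=
  (∀ p ∈ R, y ≠ p.1 ∧ y ≠ p.2) ∧ (∀ p ∈ Γ, y ≠ p.1) ∧ (∀ p ∈ Δ, y ≠ p.1)

/-- The label `y` does not occur in the stoup. -/
def FreshLabO (y : Nat) : Option LFm → Prop
  | none => True
  | some p => y ≠ p.1

/-- The labeled ecumenical modal sequent calculus labEK. Sequents are
    `R, Γ ⊢ Δ; S` where `R` holds relational atoms `xRy`, `Γ` the labeled
    left context, `Δ` the labeled classical right context, and the stoup `S`
    holds at most one labeled formula (`none` = `·`). -/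
inductive labEK : Multiset (Nat × Nat) → Multiset LFm → Multiset LFm →
    Option LFm → Prop where
  | initI (x A R Γ Δ) : labEK R ((x, A) ::ₘ Γ) Δ (some (x, A))
  | initC (x A R Γ Δ S) : labEK R ((x, A) ::ₘ Γ) ((x, A) ::ₘ Δ) S
  | der {R Γ Δ x P} : P.isPos = true → labEK R Γ ((x, P) ::ₘ Δ) (some (x, P)) →
      labEK R Γ ((x, P) ::ₘ Δ) none
  | store {R Γ Δ x N} : N.isNeg = true → labEK R Γ ((x, N) ::ₘ Δ) none →
      labEK R Γ Δ (some (x, N))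
  | wk {R Γ Δ} (x A) : labEK R Γ Δ none → labEK R Γ Δ (some (x, A))
  | andL {R Γ Δ x A B S} : labEK R ((x, A) ::ₘ (x, B) ::ₘ Γ) Δ S →
      labEK R ((x, MFm.and A B) ::ₘ Γ) Δ S
  | andR {R Γ Δ x A B} : labEK R Γ Δ (some (x, A)) → labEK R Γ Δ (some (x, B)) →
      labEK R Γ Δ (some (x, MFm.and A B))
  | oriL {R Γ Δ x A B S} : labEK R ((x, A) ::ₘ Γ) Δ S → labEK R ((x, B) ::ₘ Γ) Δ S →
      labEK R ((x, MFm.ori A B) ::ₘ Γ) Δ S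
  | oriR1 {R Γ Δ x A} (B) : labEK R Γ Δ (some (x, A)) →
      labEK R Γ Δ (some (x, MFm.ori A B))
  | oriR2 {R Γ Δ x B} (A) : labEK R Γ Δ (some (x, B)) →
      labEK R Γ Δ (some (x, MFm.ori A B))
  | impiL {R Γ Δ x A B S} : labEK R ((x, MFm.impi A B) ::ₘ Γ) Δ (some (x, A)) →
      labEK R ((x, B) ::ₘ Γ) Δ S → labEK R ((x, MFm.impi A B) ::ₘ Γ) Δ S
  | impiR {R Γ Δ x A B} : labEK R ((x, A) ::ₘ Γ) Δ (some (x, B)) →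
      labEK R Γ Δ (some (x, MFm.impi A B))
  | negL {R Γ Δ x A} : labEK R ((x, MFm.neg A) ::ₘ Γ) Δ (some (x, A)) →
      labEK R ((x, MFm.neg A) ::ₘ Γ) Δ none
  | negR {R Γ Δ x A} : labEK R ((x, A) ::ₘ Γ) Δ none →
      labEK R Γ ((x, MFm.neg A) ::ₘ Δ) none
  | orcL {R Γ Δ x A B} : labEK R ((x, A) ::ₘ Γ) Δ none →
      labEK R ((x, B) ::ₘ Γ) Δ none → labEK R ((x, MFm.orc A B) ::ₘ Γ) Δ none
  | orcR {R Γ Δ x A B} : labEK R Γ ((x, A) ::ₘ (x, B) ::ₘ Δ) none →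
      labEK R Γ ((x, MFm.orc A B) ::ₘ Δ) none
  | impcL {R Γ Δ x A B} : labEK R ((x, MFm.impc A B) ::ₘ Γ) Δ (some (x, A)) →
      labEK R ((x, B) ::ₘ Γ) Δ none → labEK R ((x, MFm.impc A B) ::ₘ Γ) Δ none
  | impcR {R Γ Δ x A B} : labEK R ((x, A) ::ₘ Γ) ((x, B) ::ₘ Δ) none →
      labEK R Γ ((x, MFm.impc A B) ::ₘ Δ) none
  | Lc {R Γ Δ x p} : labEK R ((x, MFm.ati p) ::ₘ Γ) Δ none →
      labEK R ((x, MFm.atc p) ::ₘ Γ) Δ none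
  | Rc {R Γ Δ x p} : labEK R Γ ((x, MFm.ati p) ::ₘ Δ) none →
      labEK R Γ ((x, MFm.atc p) ::ₘ Δ) none
  | boxL {R Γ Δ x y A S} : labEK ((x, y) ::ₘ R) ((y, A) ::ₘ (x, MFm.box A) ::ₘ Γ) Δ S →
      labEK ((x, y) ::ₘ R) ((x, MFm.box A) ::ₘ Γ) Δ S
  | boxR {R Γ Δ x A} (y) : y ≠ x → FreshLab y R Γ Δ →
      labEK ((x, y) ::ₘ R) Γ Δ (some (y, A)) → labEK R Γ Δ (some (x, MFm.box A))
  | diaiL {R Γ Δ x A S} (y) : y ≠ x → FreshLab y R Γ Δ → FreshLabO y S →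
      labEK ((x, y) ::ₘ R) ((y, A) ::ₘ Γ) Δ S →
      labEK R ((x, MFm.diai A) ::ₘ Γ) Δ S
  | diaiR {R Γ Δ x y A} : labEK ((x, y) ::ₘ R) Γ Δ (some (y, A)) →
      labEK ((x, y) ::ₘ R) Γ Δ (some (x, MFm.diai A))
  | diacL {R Γ Δ x A} (y) : y ≠ x → FreshLab y R Γ Δ →
      labEK ((x, y) ::ₘ R) ((y, A) ::ₘ Γ) Δ none →
      labEK R ((x, MFm.diac A) ::ₘ Γ) Δ none
  | diacR {R Γ Δ x y A} :
      labEK ((x, y) ::ₘ R) Γ ((y, A) ::ₘ (x, MFm.diac A) ::ₘ Δ) none →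
      labEK ((x, y) ::ₘ R) Γ ((x, MFm.diac A) ::ₘ Δ) none
  | pcut {R Γ Δ x P S} : P.isPos = true → labEK R Γ Δ (some (x, P)) →
      labEK R ((x, P) ::ₘ Γ) Δ S → labEK R Γ Δ S
  | ncut {R Γ Δ x N S St} : N.isNeg = true →
      (St = none ∨ ∃ z P, St = some (z, P) ∧ P.isPos = true ∧ (z, P) ∈ Δ) →
      labEK R Γ ((x, N) ::ₘ Δ) St → labEK R ((x, N) ::ₘ Γ) Δ S → labEK R Γ Δ S

private lemma rot3 {α : Type*} (a b c : α) (s : Multiset α) :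
    a ::ₘ b ::ₘ c ::ₘ s = c ::ₘ a ::ₘ b ::ₘ s := by
  rw [Multiset.cons_swap b c, Multiset.cons_swap a c]

/-- In labEK the classical diamond is definable from box and negation:
    `· ⊢ ·; x : (◇c A ↔i ¬□¬A)` is provable for every A and label x. -/
theorem labEK_diac_def (A : MFm) (x : Nat) :
    labEK 0 0 0 (some (x, MFm.iffi (.diac A) (.neg (.box (.neg A))))) := by
  have hyx : x + 1 ≠ x := by omega
  have hfresh : ∀ (B : MFm),
      FreshLab (x + 1) 0 ((x, B) ::ₘ 0) 0 := by
    intro B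
    refine ⟨?_, ?_, ?_⟩ <;> intro p hp <;> simp at hp <;> simp [hp] <;> omega
  have hfresh2 : ∀ (B C : MFm),
      FreshLab (x + 1) 0 ((x, B) ::ₘ 0) ((x, C) ::ₘ 0) := by
    intro B C
    refine ⟨?_, ?_, ?_⟩ <;> intro p hp <;> simp at hp <;> simp [hp] <;> omega
  apply labEK.andR
  · -- ◇cA →i ¬□¬A
    apply labEK.impiR
    refine labEK.store rfl ?_
    apply labEK.negR
    rw [Multiset.cons_swap]
    apply labEK.diacL (x + 1) hyx (hfresh _)
    rw [Multiset.cons_swap]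
    apply labEK.boxL
    apply labEK.negL
    rw [rot3]
    exact labEK.initI _ _ _ _ _
  · -- ¬□¬A →i ◇cA
    apply labEK.impiR
    refine labEK.store rfl ?_
    apply labEK.negL
    apply labEK.boxR (x + 1) hyx (hfresh2 _ _)
    refine labEK.store rfl ?_
    apply labEK.negR
    rw [Multiset.cons_swap]
    apply labEK.diacR
    rw [Multiset.cons_swap ((x, MFm.neg (MFm.box (MFm.neg A)))) ((x + 1, A))]
    exact labEK.initC _ _ _ _ _ _

end Ecumenical
end
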